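/- arXiv:1706.06082 — 2 statements merged into one kernel-verified Lean document; each statement's English description precedes it below -/
import Mathlib

section
/- (Serret's theorem) Two irrational numbers x and y are GL₂(ℤ)-equivalent (∃ a,b,c,d ∈ ℤ, ad - bc = ±1, y = (ax+b)/(cx+d)) if and only if their continued fraction expansions have a common complete quotient. -/
noncomputable def cq (x : ℝ) : ℕ → ℝ
  | 0 => x
  | n + 1 => 1 / (cq x n - ⌊cq x n⌋)

def CFEquiv (x y : ℝ) : Prop := ∃ i j : ℕ, cq x i = cq y j

/-!
Each step t ↦ 1 / (t - ⌊t⌋) of the continued fraction algorithm is the Möbius map of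
!![0, 1; 1, -⌊t⌋], of determinant -1, so a common complete quotient makes x and y
GL₂(ℤ)-equivalent. Conversely, "having a common complete quotient" is an equivalence relation
preserved by x ↦ x + 1 (the complete quotients agree from the first one on), by u ↦ 1/u for
u > 0, and by u ↦ -u (which trades the fractional part f for 1 - f). Hence it is preserved by
S : x ↦ -1/x and T : x ↦ x + 1, which generate SL(2, ℤ), and x ↦ -x accounts for
determinant -1.
-/

open Matrix MatrixGroups ModularGroup

theorem cq_add (x : ℝ) (i : ℕ) : ∀ k, cq (cq x i) k = cq x (i + k)
  | 0 => rfl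
  | k + 1 => by rw [cq, cq_add x i k, ← Nat.add_assoc, cq]

theorem cq_one (x : ℝ) : cq x 1 = (Int.fract x)⁻¹ := by
  show 1 / (x - ⌊x⌋) = _
  rw [one_div]
  rfl

theorem cq_one_of_mem_Ioo {u : ℝ} (h0 : 0 < u) (h1 : u < 1) : cq u 1 = u⁻¹ := by
  rw [cq_one, Int.fract_eq_self.mpr ⟨h0.le, h1⟩]

namespace CFEquiv

@[refl]
theorem refl (x : ℝ) : CFEquiv x x := ⟨0, 0, rfl⟩

theorem symm {x y : ℝ} (h : CFEquiv x y) : CFEquiv y x :=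
  let ⟨i, j, hij⟩ := h
  ⟨j, i, hij.symm⟩

theorem trans {x y z : ℝ} (hxy : CFEquiv x y) (hyz : CFEquiv y z) : CFEquiv x z := by
  obtain ⟨i, j, hij⟩ := hxy
  obtain ⟨j', k, hjk⟩ := hyz
  refine ⟨i + j', k + j, ?_⟩
  rw [← cq_add, hij, cq_add, Nat.add_comm, ← cq_add, hjk, cq_add]

instance : Trans CFEquiv CFEquiv CFEquiv := ⟨trans⟩

end CFEquiv

theorem cfEquiv_add_intCast (u : ℝ) (m : ℤ) : CFEquiv u (u + m) :=
  ⟨1, 1, by rw [cq_one, cq_one, Int.fract_add_intCast]⟩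

theorem cfEquiv_inv {u : ℝ} (hu : 0 < u) : CFEquiv u u⁻¹ := by
  rcases lt_trichotomy u 1 with h1 | rfl | h1
  · exact ⟨1, 0, cq_one_of_mem_Ioo hu h1⟩
  · simpa using CFEquiv.refl 1
  · refine ⟨0, 1, ?_⟩
    rw [cq_one_of_mem_Ioo (inv_pos.mpr hu) (inv_lt_one_of_one_lt₀ h1), inv_inv]
    rfl

theorem cfEquiv_one_sub {f : ℝ} (h0 : 0 ≤ f) (h1 : f < 1) : CFEquiv f (1 - f) := by
  rcases h0.eq_or_lt with rfl | h0
  · simpa using cfEquiv_add_intCast 0 1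
  have h1' : 0 < 1 - f := sub_pos.mpr h1
  calc CFEquiv f f⁻¹ := cfEquiv_inv h0
    CFEquiv _ (f⁻¹ + (-1 : ℤ)) := cfEquiv_add_intCast _ _
    _ = (f / (1 - f))⁻¹ := by field_simp; ring
    CFEquiv _ (f / (1 - f)) := (cfEquiv_inv (div_pos h0 h1')).symm
    CFEquiv _ (f / (1 - f) + (1 : ℤ)) := cfEquiv_add_intCast _ _
    _ = (1 - f)⁻¹ := by field_simp; ring
    CFEquiv _ (1 - f) := (cfEquiv_inv h1').symm

theorem cfEquiv_neg (u : ℝ) : CFEquiv u (-u) :=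
  calc CFEquiv u (Int.fract u + ⌊u⌋) := by rw [Int.fract_add_floor]
    CFEquiv _ (Int.fract u) := (cfEquiv_add_intCast _ _).symm
    CFEquiv _ (1 - Int.fract u) := cfEquiv_one_sub (Int.fract_nonneg u) (Int.fract_lt_one u)
    CFEquiv _ (1 - Int.fract u + (-⌊u⌋ - 1 : ℤ)) := cfEquiv_add_intCast _ _
    _ = -u := by rw [Int.fract]; push_cast; ring

theorem cfEquiv_neg_inv {u : ℝ} (hu : u ≠ 0) : CFEquiv u (-u⁻¹) := by
  rcases hu.lt_or_gt with hu | hu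
  · calc CFEquiv u (-u) := cfEquiv_neg u
      CFEquiv _ (-u)⁻¹ := cfEquiv_inv (neg_pos.mpr hu)
      _ = -u⁻¹ := inv_neg
  · exact (cfEquiv_inv hu).trans (cfEquiv_neg _)

noncomputable def mobius (M : Matrix (Fin 2) (Fin 2) ℤ) (x : ℝ) : ℝ :=
  (M 0 0 * x + M 0 1) / (M 1 0 * x + M 1 1)

section Mobius

variable {M N : Matrix (Fin 2) (Fin 2) ℤ} {x : ℝ}

@[simp]
theorem mobius_one (x : ℝ) : mobius 1 x = x := by
  simp [mobius]

theorem mobius_mul (hN : (N 1 0 : ℝ) * x + N 1 1 ≠ 0) :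
    mobius (M * N) x = mobius M (mobius N x) := by
  simp only [mobius, mul_apply, Fin.sum_univ_two, Int.cast_add, Int.cast_mul]
  rw [mul_div_assoc', mul_div_assoc', div_add' _ _ _ hN, div_add' _ _ _ hN,
    div_div_div_cancel_right₀ hN]
  ring

theorem mobius_denom_ne_zero (hx : Irrational x) (hM : M.det ≠ 0) :
    (M 1 0 : ℝ) * x + M 1 1 ≠ 0 := by
  rcases eq_or_ne (M 1 0) 0 with hc | hc
  · rw [det_fin_two, hc, mul_zero, sub_zero] at hM
    simpa [hc] using right_ne_zero_of_mul hM
  · exact ((hx.intCast_mul hc).add_intCast _).ne_zero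

theorem irrational_mobius (hx : Irrational x) (hM : M.det ≠ 0) : Irrational (mobius M x) := by
  set y := mobius M x
  have hden := mobius_denom_ne_zero hx hM
  have hy : y * (M 1 0 * x + M 1 1) = M 0 0 * x + M 0 1 := div_mul_cancel₀ _ hden
  have hdet : (M 0 0 - M 1 0 * y) * (M 1 0 * x + M 1 1) = M.det := by
    rw [det_fin_two]
    push_cast
    linear_combination (-(M 1 0 : ℝ)) * hy
  have hne : (M 0 0 : ℝ) - M 1 0 * y ≠ 0 :=
    left_ne_zero_of_mul (hdet ▸ Int.cast_ne_zero.mpr hM)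
  have hxy : x = (M 1 1 * y - M 0 1) / (M 0 0 - M 1 0 * y) := by
    rw [eq_div_iff hne]
    linear_combination -hy
  rintro ⟨q, hq⟩
  exact hx ⟨(M 1 1 * q - M 0 1) / (M 0 0 - M 1 0 * q), by rw [hxy, ← hq]; push_cast; rfl⟩

end Mobius

def GL2Equiv (x y : ℝ) : Prop :=
  ∃ M : Matrix (Fin 2) (Fin 2) ℤ, IsUnit M.det ∧ y = mobius M x

namespace GL2Equiv

variable {x y z : ℝ}

theorem refl (x : ℝ) : GL2Equiv x x := ⟨1, by simp⟩

theorem symm (hx : Irrational x) (h : GL2Equiv x y) : GL2Equiv y x := by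
  obtain ⟨M, hM, rfl⟩ := h
  refine ⟨M⁻¹, isUnit_nonsing_inv_det M hM, ?_⟩
  rw [← mobius_mul (mobius_denom_ne_zero hx hM.ne_zero), nonsing_inv_mul M hM, mobius_one]

theorem trans (hx : Irrational x) (hxy : GL2Equiv x y) (hyz : GL2Equiv y z) : GL2Equiv x z := by
  obtain ⟨M, hM, rfl⟩ := hxy
  obtain ⟨N, hN, rfl⟩ := hyz
  refine ⟨N * M, by rw [det_mul]; exact hN.mul hM, ?_⟩
  rw [mobius_mul (mobius_denom_ne_zero hx hM.ne_zero)]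

end GL2Equiv

theorem cq_succ_eq_mobius (x : ℝ) (n : ℕ) :
    cq x (n + 1) = mobius !![0, 1; 1, -⌊cq x n⌋] (cq x n) := by
  simp [mobius, cq, sub_eq_add_neg]

theorem gl2Equiv_cq {x : ℝ} (hx : Irrational x) : ∀ n, GL2Equiv x (cq x n)
  | 0 => GL2Equiv.refl x
  | n + 1 => (gl2Equiv_cq hx n).trans hx ⟨_, by simp [det_fin_two_of], cq_succ_eq_mobius x n⟩

theorem CFEquiv.gl2Equiv {x y : ℝ} (hx : Irrational x) (hy : Irrational y) (h : CFEquiv x y) :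
    GL2Equiv x y := by
  obtain ⟨i, j, hij⟩ := h
  have hxy := gl2Equiv_cq hx i
  rw [hij] at hxy
  exact hxy.trans hx ((gl2Equiv_cq hy j).symm hy)

namespace Matrix.SpecialLinearGroup

theorem det_coe_ne_zero (g : SL(2, ℤ)) : (g : Matrix (Fin 2) (Fin 2) ℤ).det ≠ 0 := by
  simp

theorem mobius_coe_mul {x : ℝ} (hx : Irrational x) (g h : SL(2, ℤ)) :
    mobius ↑(g * h) x = mobius g (mobius h x) := by
  rw [coe_mul, _root_.mobius_mul (mobius_denom_ne_zero hx h.det_coe_ne_zero)]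

theorem mobius_coe_inv {x : ℝ} (hx : Irrational x) (g : SL(2, ℤ)) :
    mobius g (mobius ↑g⁻¹ x) = x := by
  rw [← mobius_coe_mul hx, mul_inv_cancel, coe_one, mobius_one]

end Matrix.SpecialLinearGroup

def cfStabilizer : Subgroup SL(2, ℤ) where
  carrier := {g | ∀ x, Irrational x → CFEquiv x (mobius g x)}
  one_mem' x _ := by simpa using CFEquiv.refl x
  mul_mem' {g h} hg hh x hx := by
    rw [SpecialLinearGroup.mobius_coe_mul hx]
    exact (hh x hx).trans (hg _ (irrational_mobius hx h.det_coe_ne_zero))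
  inv_mem' {g} hg x hx := by
    have := hg _ (irrational_mobius hx g⁻¹.det_coe_ne_zero)
    rw [SpecialLinearGroup.mobius_coe_inv hx] at this
    exact this.symm

theorem Matrix.SpecialLinearGroup.cfEquiv_mobius (g : SL(2, ℤ)) {x : ℝ} (hx : Irrational x) :
    CFEquiv x (mobius g x) := by
  have hST : Subgroup.closure {S, T} ≤ cfStabilizer := by
    rw [Subgroup.closure_le, Set.insert_subset_iff, Set.singleton_subset_iff]
    constructor
    · intro x hx
      simpa [mobius, coe_S, neg_div] using cfEquiv_neg_inv hx.ne_zero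
    · intro x _
      simpa [mobius, coe_T] using cfEquiv_add_intCast x 1
  exact hST (SpecialLinearGroup.SL2Z_generators ▸ Subgroup.mem_top g) x hx

theorem GL2Equiv.cfEquiv {x y : ℝ} (hx : Irrational x) (h : GL2Equiv x y) : CFEquiv x y := by
  obtain ⟨M, hM, rfl⟩ := h
  rcases Int.isUnit_iff.mp hM with hdet | hdet
  · exact SpecialLinearGroup.cfEquiv_mobius ⟨M, hdet⟩ hx
  · have hdet' : (M * !![-1, 0; 0, 1]).det = 1 := by simp [det_mul, hdet]
    have hneg : mobius (M * !![-1, 0; 0, 1]) (-x) = mobius M x := by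
      rw [mobius_mul (by simp)]
      simp [mobius]
    rw [← hneg]
    exact (cfEquiv_neg x).trans (SpecialLinearGroup.cfEquiv_mobius ⟨_, hdet'⟩ hx.neg)

theorem gl2Equiv_iff {x y : ℝ} : GL2Equiv x y ↔ ∃ a b c d : ℤ,
    (a * d - b * c = 1 ∨ a * d - b * c = -1) ∧ y = ((a : ℝ) * x + b) / ((c : ℝ) * x + d) := by
  constructor
  · rintro ⟨M, hM, rfl⟩
    exact ⟨M 0 0, M 0 1, M 1 0, M 1 1, by rwa [← det_fin_two, ← Int.isUnit_iff], rfl⟩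
  · rintro ⟨a, b, c, d, hdet, rfl⟩
    exact ⟨!![a, b; c, d], by rwa [det_fin_two_of, Int.isUnit_iff], by simp [mobius]⟩

theorem serret (x y : ℝ) (hx : Irrational x) (hy : Irrational y) :
    (∃ a b c d : ℤ, (a * d - b * c = 1 ∨ a * d - b * c = -1) ∧
      y = ((a : ℝ) * x + b) / ((c : ℝ) * x + d)) ↔ CFEquiv x y := by
  rw [← gl2Equiv_iff]
  exact ⟨GL2Equiv.cfEquiv hx, CFEquiv.gl2Equiv hx hy⟩
end

section
/- If x and y are irrational and y = εx + b for some b ∈ ℤ and ε = ±1, then x ∼ y (their continued fraction expansions have a common complete quotient). -/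
lemma cq_succ (x : ℝ) (n : ℕ) : cq x (n + 1) = 1 / Int.fract (cq x n) := rfl

lemma cq_succ_congr_fract {x y : ℝ} (h : Int.fract x = Int.fract y) (n : ℕ) :
    cq x (n + 1) = cq y (n + 1) := by
  induction n with
  | zero => exact congrArg (1 / ·) h
  | succ n ih => rw [cq_succ x, cq_succ y, ih]

lemma cq_add_intCast_succ (x : ℝ) (b : ℤ) (n : ℕ) : cq (x + b) (n + 1) = cq x (n + 1) :=
  cq_succ_congr_fract (Int.fract_add_intCast x b) n

lemma cq_neg_two {x : ℝ} (h0 : 0 < Int.fract x) (h : Int.fract x < 1 / 2) :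
    cq (-x) 2 = cq x 1 - 1 := by
  set f := Int.fract x
  have hf0 : f ≠ 0 := h0.ne'
  have hf1 : 1 - f ≠ 0 := by linarith
  have hcq1 : cq (-x) 1 = 1 / (1 - f) := by rw [cq_succ, cq, Int.fract_neg h0.ne']
  have hfloor : ⌊1 / (1 - f)⌋ = 1 := by
    rw [Int.floor_eq_iff, le_div_iff₀ (by linarith), div_lt_iff₀ (by linarith)]
    constructor <;> push_cast <;> linarith
  have hcx1 : cq x 1 = 1 / f := rfl
  have hfract : 1 / (1 - f) - 1 = f / (1 - f) := by field_simp; ring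
  rw [cq_succ, hcq1, Int.fract, hfloor, hcx1, Int.cast_one, hfract]
  field_simp

lemma cq_neg_three {x : ℝ} (h0 : 0 < Int.fract x) (h : Int.fract x < 1 / 2) :
    cq (-x) 3 = cq x 2 := by
  rw [cq_succ, cq_neg_two h0 h, Int.fract_sub_one]
  rfl

lemma Irrational.fract_pos {x : ℝ} (hx : Irrational x) : 0 < Int.fract x :=
  Int.fract_pos.2 (hx.ne_int _)

lemma Irrational.fract_ne_half {x : ℝ} (hx : Irrational x) : Int.fract x ≠ 1 / 2 := by
  intro h
  refine hx.ne_rat (⌊x⌋ + 1 / 2) ?_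
  push_cast
  rw [← h, Int.floor_add_fract]

theorem pm_add_int_cfEquiv_general (x y : ℝ) (hx : Irrational x)
    (ε : ℤ) (hε : ε = 1 ∨ ε = -1) (b : ℤ) (h : y = (ε : ℝ) * x + b) :
    CFEquiv x y := by
  rcases hε with rfl | rfl
  · refine ⟨1, 1, ?_⟩
    rw [h, Int.cast_one, one_mul, cq_add_intCast_succ]
  · have hy : y = -x + b := by rw [h]; push_cast; ring
    rcases hx.fract_ne_half.lt_or_gt with hlt | hgt
    · exact ⟨2, 3, by rw [hy, cq_add_intCast_succ, cq_neg_three hx.fract_pos hlt]⟩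
    · have hneg : Int.fract (-x) = 1 - Int.fract x := Int.fract_neg hx.fract_pos.ne'
      refine ⟨3, 2, ?_⟩
      rw [hy, cq_add_intCast_succ, ← cq_neg_three (x := -x) (by linarith [Int.fract_lt_one x])
        (by linarith), neg_neg]

theorem pm_add_int_cfEquiv (x y : ℝ) (hx : Irrational x) (hy : Irrational y)
    (ε : ℤ) (hε : ε = 1 ∨ ε = -1) (b : ℤ) (h : y = (ε : ℝ) * x + b) :
    CFEquiv x y :=
  pm_add_int_cfEquiv_general x y hx ε hε b h
end
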